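/- arXiv:math/0501521 — 4 statements merged into one kernel-verified Lean document; each statement's English description precedes it below -/
import Mathlib

section
/- The polynomial P(x,y) = x^6 + 3x^4y^2 + 3x^2y^4 + y^6 + 2x^3 + 2xy^2 + 1 is irreducible in ℚ[x,y]. -/
namespace PIrrAux

open Polynomial

noncomputable def f3 : Polynomial (ZMod 3) := X ^ 6 + C 2 * X ^ 3 + C 2 * X + C 2

lemma f3_monic : f3.Monic := by unfold f3; monicity!

lemma f3_natDegree : f3.natDegree = 6 := by unfold f3; compute_degree!

lemma no_deg1 (g : Polynomial (ZMod 3)) (hm : g.Monic) (hd : g.natDegree = 1)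
    (hdvd : g ∣ f3) : False := by
  set a := g.coeff 0 with ha
  have h1 : g.coeff 1 = 1 := by have := hm.coeff_natDegree; rwa [hd] at this
  have hg : g = X + C a := by
    have h := g.as_sum_range' 2 (by omega)
    rw [h]
    simp [Finset.sum_range_succ, ← C_mul_X_pow_eq_monomial, h1]
    ring
  have key : f3 = g * (C (2 + 2*a^2 - a^5) + C (a^4 - 2*a) * X + C (2 - a^3) * X^2
      + C (a^2) * X^3 + C (-a) * X^4 + X^5) + C (2 - 2*a - 2*a^3 + a^6) := by
    rw [hg]; unfold f3
    simp only [map_add, map_sub, map_mul, map_pow, map_neg, map_ofNat]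
    ring
  have hr : g ∣ C (2 - 2*a - 2*a^3 + a^6) := by
    have : g ∣ f3 - g * (C (2 + 2*a^2 - a^5) + C (a^4 - 2*a) * X + C (2 - a^3) * X^2
      + C (a^2) * X^3 + C (-a) * X^4 + X^5) := dvd_sub hdvd (Dvd.intro _ rfl)
    rwa [key, add_sub_cancel_left] at this
  have hr0 : C (2 - 2*a - 2*a^3 + a^6) = (0 : Polynomial (ZMod 3)) := by
    refine eq_zero_of_dvd_of_degree_lt hr ?_
    refine lt_of_le_of_lt (degree_C_le) ?_
    rw [degree_eq_natDegree hm.ne_zero, hd]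
    norm_num
  rw [C_eq_zero] at hr0
  have hcon : ∀ x : ZMod 3, ¬ (2 - 2*x - 2*x^3 + x^6 = 0) := by decide
  exact hcon a hr0

lemma no_deg2 (g : Polynomial (ZMod 3)) (hm : g.Monic) (hd : g.natDegree = 2)
    (hdvd : g ∣ f3) : False := by
  set a := g.coeff 1 with ha
  set b := g.coeff 0 with hb
  have h2 : g.coeff 2 = 1 := by have := hm.coeff_natDegree; rwa [hd] at this
  have hg : g = X^2 + C a * X + C b := by
    have h := g.as_sum_range' 3 (by omega)
    rw [h]
    simp [Finset.sum_range_succ, ← C_mul_X_pow_eq_monomial, h2]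
    ring
  set q : Polynomial (ZMod 3) := C (b^2 - 2*a - 3*a^2*b + a^4) + C (2 + 2*a*b - a^3) * X
      + C (a^2 - b) * X^2 + C (-a) * X^3 + X^4 with hq
  set r : Polynomial (ZMod 3) := C (2 - b^3 + 2*a*b + 3*a^2*b^2 - a^4*b)
      + C (2 - 2*b - 3*a*b^2 + 2*a^2 + 4*a^3*b - a^5) * X with hrdef
  have key : f3 = g * q + r := by
    rw [hg, hq, hrdef]; unfold f3
    simp only [map_add, map_sub, map_mul, map_pow, map_neg, map_ofNat]
    ring
  have hr : g ∣ r := by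
    have : g ∣ f3 - g * q := dvd_sub hdvd (Dvd.intro _ rfl)
    rwa [key, add_sub_cancel_left] at this
  have hr0 : r = 0 := by
    refine eq_zero_of_dvd_of_degree_lt hr ?_
    rw [degree_eq_natDegree hm.ne_zero, hd]
    refine lt_of_le_of_lt (?_ : degree r ≤ 1) (by norm_num)
    rw [hrdef]; compute_degree
  have h0 : 2 - b^3 + 2*a*b + 3*a^2*b^2 - a^4*b = 0 := by
    have := congrArg (fun p => Polynomial.coeff p 0) hr0
    simp only [hrdef, coeff_add, coeff_C_mul, coeff_C, coeff_X_pow, coeff_X, coeff_zero] at this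
    norm_num [-ZMod.pow_card] at this
    linear_combination this
  have h1 : 2 - 2*b - 3*a*b^2 + 2*a^2 + 4*a^3*b - a^5 = 0 := by
    have := congrArg (fun p => Polynomial.coeff p 1) hr0
    simp only [hrdef, coeff_add, coeff_C_mul, coeff_C, coeff_X_pow, coeff_X, coeff_zero] at this
    norm_num [-ZMod.pow_card] at this
    linear_combination this
  have hcon : ∀ x y : ZMod 3, ¬ (2 - y^3 + 2*x*y + 3*x^2*y^2 - x^4*y = 0
      ∧ 2 - 2*y - 3*x*y^2 + 2*x^2 + 4*x^3*y - x^5 = 0) := by decide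
  exact hcon a b ⟨h0, h1⟩

lemma no_deg3 (g : Polynomial (ZMod 3)) (hm : g.Monic) (hd : g.natDegree = 3)
    (hdvd : g ∣ f3) : False := by
  set a := g.coeff 2 with ha
  set b := g.coeff 1 with hb
  set c := g.coeff 0 with hc
  have h3 : g.coeff 3 = 1 := by have := hm.coeff_natDegree; rwa [hd] at this
  have hg : g = X^3 + C a * X^2 + C b * X + C c := by
    have h := g.as_sum_range' 4 (by omega)
    rw [h]
    simp [Finset.sum_range_succ, ← C_mul_X_pow_eq_monomial, h3]
    ring
  set q : Polynomial (ZMod 3) := C (2 - c + 2*a*b - a^3) + C (a^2 - b) * X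
      + C (-a) * X^2 + X^3 with hq
  set r : Polynomial (ZMod 3) := C (2 - 2*c + c^2 - 2*a*b*c + a^3*c)
      + C (2 - 2*b + 2*b*c - 2*a*b^2 - a^2*c + a^3*b) * X
      + C (b^2 - 2*a + 2*a*c - 3*a^2*b + a^4) * X^2 with hrdef
  have key : f3 = g * q + r := by
    rw [hg, hq, hrdef]; unfold f3
    simp only [map_add, map_sub, map_mul, map_pow, map_neg, map_ofNat]
    ring
  have hr : g ∣ r := by
    have : g ∣ f3 - g * q := dvd_sub hdvd (Dvd.intro _ rfl)
    rwa [key, add_sub_cancel_left] at this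
  have hr0 : r = 0 := by
    refine eq_zero_of_dvd_of_degree_lt hr ?_
    rw [degree_eq_natDegree hm.ne_zero, hd]
    refine lt_of_le_of_lt (?_ : degree r ≤ 2) (by norm_num)
    rw [hrdef]; compute_degree
  have h0 : 2 - 2*c + c^2 - 2*a*b*c + a^3*c = 0 := by
    have := congrArg (fun p => Polynomial.coeff p 0) hr0
    simp only [hrdef, coeff_add, coeff_C_mul, coeff_C, coeff_X_pow, coeff_X, coeff_zero] at this
    norm_num [-ZMod.pow_card] at this
    linear_combination this
  have h1 : 2 - 2*b + 2*b*c - 2*a*b^2 - a^2*c + a^3*b = 0 := by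
    have := congrArg (fun p => Polynomial.coeff p 1) hr0
    simp only [hrdef, coeff_add, coeff_C_mul, coeff_C, coeff_X_pow, coeff_X, coeff_zero] at this
    norm_num [-ZMod.pow_card] at this
    linear_combination this
  have h2 : b^2 - 2*a + 2*a*c - 3*a^2*b + a^4 = 0 := by
    have := congrArg (fun p => Polynomial.coeff p 2) hr0
    simp only [hrdef, coeff_add, coeff_C_mul, coeff_C, coeff_X_pow, coeff_X, coeff_zero] at this
    norm_num [-ZMod.pow_card] at this
    linear_combination this
  have hcon : ∀ x y z : ZMod 3, ¬ (2 - 2*z + z^2 - 2*x*y*z + x^3*z = 0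
      ∧ 2 - 2*y + 2*y*z - 2*x*y^2 - x^2*z + x^3*y = 0
      ∧ y^2 - 2*x + 2*x*z - 3*x^2*y + x^4 = 0) := by decide
  exact hcon a b c ⟨h0, h1, h2⟩

lemma no_small (g : Polynomial (ZMod 3)) (h1 : 1 ≤ g.natDegree) (h3 : g.natDegree ≤ 3)
    (hdvd : g ∣ f3) : False := by
  have hg0 : g ≠ 0 := by
    rintro rfl
    simp at h1
  have hu : IsUnit (C g.leadingCoeff⁻¹) := by
    refine isUnit_C.mpr (isUnit_iff_ne_zero.mpr ?_)
    exact inv_ne_zero (leadingCoeff_ne_zero.mpr hg0)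
  set g' := g * C g.leadingCoeff⁻¹ with hg'
  have hm : g'.Monic := monic_mul_leadingCoeff_inv hg0
  have hdeg : g'.natDegree = g.natDegree := by
    rw [hg', natDegree_mul hg0 (by simpa using hu.ne_zero)]
    simp
  have hdvd' : g' ∣ f3 := (hu.mul_right_dvd).mpr hdvd
  have hcases : g'.natDegree = 1 ∨ g'.natDegree = 2 ∨ g'.natDegree = 3 := by omega
  rcases hcases with h | h | h
  · exact no_deg1 g' hm h hdvd'
  · exact no_deg2 g' hm h hdvd'
  · exact no_deg3 g' hm h hdvd'

lemma unit_of_natDegree_zero (a : Polynomial (ZMod 3)) (ha0 : a ≠ 0)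
    (h0 : a.natDegree = 0) : IsUnit a := by
  refine isUnit_iff_degree_eq_zero.mpr ?_
  rw [degree_eq_natDegree ha0, h0]
  rfl

lemma f3_irred : Irreducible f3 := by
  rw [irreducible_iff]
  constructor
  · exact not_isUnit_of_natDegree_pos _ (by rw [f3_natDegree]; norm_num)
  · intro a b hab
    by_contra hc
    push_neg at hc
    obtain ⟨hua, hub⟩ := hc
    have ha0 : a ≠ 0 := by rintro rfl; rw [zero_mul] at hab; exact f3_monic.ne_zero hab
    have hb0 : b ≠ 0 := by rintro rfl; rw [mul_zero] at hab; exact f3_monic.ne_zero hab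
    have hsum : a.natDegree + b.natDegree = 6 := by
      rw [← natDegree_mul ha0 hb0, ← hab, f3_natDegree]
    have hap : 1 ≤ a.natDegree := by
      by_contra h
      exact hua (unit_of_natDegree_zero a ha0 (by omega))
    have hbp : 1 ≤ b.natDegree := by
      by_contra h
      exact hub (unit_of_natDegree_zero b hb0 (by omega))
    rcases le_or_gt a.natDegree 3 with h | h
    · exact no_small a hap h ⟨b, hab⟩
    · exact no_small b hbp (by omega) ⟨a, by rw [hab, mul_comm]⟩

noncomputable def fZ : Polynomial ℤ := X ^ 6 + 3 * X ^ 4 + 2 * X ^ 3 + 3 * X ^ 2 + 2 * X + 2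

lemma fZ_monic : fZ.Monic := by unfold fZ; monicity!

lemma fZ_map : fZ.map (Int.castRingHom (ZMod 3)) = f3 := by
  have h3 : (3 : Polynomial (ZMod 3)) = 0 := by
    rw [← map_ofNat (C : ZMod 3 →+* Polynomial (ZMod 3)) 3, show (3 : ZMod 3) = 0 by decide,
      map_zero]
  have h2 : (C 2 : Polynomial (ZMod 3)) = 2 := map_ofNat C 2
  unfold fZ f3
  simp only [Polynomial.map_add, Polynomial.map_mul, Polynomial.map_pow, Polynomial.map_X,
    Polynomial.map_ofNat, h3, h2]
  ring

lemma fZ_irred : Irreducible fZ :=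
  Polynomial.Monic.irreducible_of_irreducible_map (Int.castRingHom (ZMod 3)) fZ fZ_monic
    (by rw [fZ_map]; exact f3_irred)

lemma fQ_irred : Irreducible
    ((X ^ 6 + 3 * X ^ 4 + 2 * X ^ 3 + 3 * X ^ 2 + 2 * X + 2 : Polynomial ℚ)) := by
  have h := (Polynomial.IsPrimitive.Int.irreducible_iff_irreducible_map_cast fZ_monic.isPrimitive).mp fZ_irred
  have : fZ.map (Int.castRingHom ℚ)
      = X ^ 6 + 3 * X ^ 4 + 2 * X ^ 3 + 3 * X ^ 2 + 2 * X + 2 := by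
    unfold fZ
    simp only [Polynomial.map_add, Polynomial.map_mul, Polynomial.map_pow, Polynomial.map_X,
      Polynomial.map_ofNat]
  rwa [this] at h

noncomputable def QY : Polynomial (MvPolynomial (Fin 1) ℚ) :=
  X ^ 6 + C (3 * (MvPolynomial.X 0) ^ 2) * X ^ 4 + 2 * X ^ 3
    + C (3 * (MvPolynomial.X 0) ^ 4) * X ^ 2 + C (2 * (MvPolynomial.X 0) ^ 2) * X
    + C ((MvPolynomial.X 0) ^ 6 + 1)

lemma QY_monic : QY.Monic := by unfold QY; monicity!

lemma QY_map : QY.map (MvPolynomial.eval (fun _ => (1 : ℚ)))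
    = X ^ 6 + 3 * X ^ 4 + 2 * X ^ 3 + 3 * X ^ 2 + 2 * X + 2 := by
  unfold QY
  simp only [Polynomial.map_add, Polynomial.map_mul, Polynomial.map_pow, Polynomial.map_X,
    Polynomial.map_ofNat, Polynomial.map_C, map_add, map_mul, map_pow, map_one, map_ofNat,
    MvPolynomial.eval_X, one_pow, mul_one]
  norm_num

lemma QY_irred : Irreducible QY :=
  Polynomial.Monic.irreducible_of_irreducible_map (MvPolynomial.eval (fun _ => (1 : ℚ)))
    QY QY_monic (by rw [QY_map]; exact fQ_irred)

end PIrrAux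

open MvPolynomial

theorem P_irreducible :
    Irreducible ((X 0) ^ 6 + 3 * (X 0) ^ 4 * (X 1) ^ 2 + 3 * (X 0) ^ 2 * (X 1) ^ 4
      + (X 1) ^ 6 + 2 * (X 0) ^ 3 + 2 * (X 0) * (X 1) ^ 2 + 1 :
      MvPolynomial (Fin 2) ℚ) := by
  rw [← MulEquiv.irreducible_iff (MvPolynomial.finSuccEquiv ℚ 1)]
  have key : (MvPolynomial.finSuccEquiv ℚ 1)
      ((X 0) ^ 6 + 3 * (X 0) ^ 4 * (X 1) ^ 2 + 3 * (X 0) ^ 2 * (X 1) ^ 4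
      + (X 1) ^ 6 + 2 * (X 0) ^ 3 + 2 * (X 0) * (X 1) ^ 2 + 1) = PIrrAux.QY := by
    rw [show (1 : Fin 2) = Fin.succ 0 from rfl]
    unfold PIrrAux.QY
    simp only [map_add, map_mul, map_pow, map_one, map_ofNat,
      MvPolynomial.finSuccEquiv_X_zero, MvPolynomial.finSuccEquiv_X_succ]
    ring
  rw [key]
  exact PIrrAux.QY_irred
end

section
/- Let n ≥ 8 and let T be a (2n)×2 matrix with positive real entries x_i, y_i (i = 1,…,2n). Set S_i = (x_{2i-1} y_{2i-1} x_{2i} y_{2i})^{1/2} for i = 1,…,n, and define r(T) to be the (2n-2)×2 matrix whose rows in order are (x_1/S_1, S_1/y_1), then for i = 2,…,n-1 the two rows (x_{2i}/S_i, S_i/y_{2i}) followed by (x_{2i-1}/S_i, S_i/y_{2i-1}), and finally (x_{2n}/S_n, S_n/y_{2n}). Then the fourth iterate r^{(4)}(T) is the (2n-8)×2 matrix with rows (x_5, y_5), (x_6, y_6), …, (x_{2n-4}, y_{2n-4}). -/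
/-- `Sq x y i = S_i = (x_{2i-1} y_{2i-1} x_{2i} y_{2i})^{1/2}`. -/
noncomputable def Sq (x y : ℕ → ℝ) (i : ℕ) : ℝ :=
  Real.sqrt (x (2 * i - 1) * y (2 * i - 1) * x (2 * i) * y (2 * i))

/-- First column of `r(T)`: row `j` of `r(T)` is `(x_1/S_1, S_1/y_1)` for `j = 1`,
`(x_{2i}/S_i, S_i/y_{2i})` for `j = 2i-2` even, `(x_{2i-1}/S_i, S_i/y_{2i-1})` for
`j = 2i-1` odd, and `(x_{2n}/S_n, S_n/y_{2n})` for `j = 2n-2`. -/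
noncomputable def rOpX (x y : ℕ → ℝ) : ℕ → ℝ :=
  fun j => x (if j % 2 = 0 then j + 2 else j) /
    Sq x y (if j % 2 = 0 then j / 2 + 1 else (j + 1) / 2)

/-- Second column of `r(T)`. -/
noncomputable def rOpY (x y : ℕ → ℝ) : ℕ → ℝ :=
  fun j => Sq x y (if j % 2 = 0 then j / 2 + 1 else (j + 1) / 2) /
    y (if j % 2 = 0 then j + 2 else j)

/-- The operator `r` acting on the pair of columns of a `(2k) × 2` matrix. -/
noncomputable def rOp (p : (ℕ → ℝ) × (ℕ → ℝ)) : (ℕ → ℝ) × (ℕ → ℝ) :=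
  (rOpX p.1 p.2, rOpY p.1 p.2)

/-!
Write `P j = x_j y_j` and `Q j = x_j / y_j` for the rows of a positive matrix, and
`σ j = j + 2` for even `j`, `σ j = j` for odd `j`. One application of `r` gives
`P' j = Q (σ j)` (the factor `S_i` cancels) and `Q' j = 1 / P (j + 1)`
(as `S_i² = P (σ j) P (j + 1)`). Hence `P'' j = 1 / P (σ j + 1)` and `Q'' j = 1 / Q (σ (j + 1))`; both index maps flip parity, and
composing each with itself gives `j ↦ j + 4`. A positive row is determined by its `P` and `Q`.
-/

/-- The map `σ`: row `j` of `r(T)` comes from row `σ j` of `T`, and the `S_i` it involves is that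
of the block formed by rows `σ j` and `j + 1`. -/
def rowSrc (j : ℕ) : ℕ := if j % 2 = 0 then j + 2 else j

lemma rowSrc_rowSrc_add_one_add_one (j : ℕ) : rowSrc (rowSrc j + 1) + 1 = j + 4 := by
  unfold rowSrc; split_ifs <;> omega

lemma rowSrc_rowSrc_succ_add_one (j : ℕ) : rowSrc (rowSrc (j + 1) + 1) = j + 4 := by
  unfold rowSrc; split_ifs <;> omega

lemma le_rowSrc (j : ℕ) : j ≤ rowSrc j := by
  unfold rowSrc; split_ifs <;> omega

lemma rowSrc_le (j : ℕ) : rowSrc j ≤ j + 2 := by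
  unfold rowSrc; split_ifs <;> omega

section Rows

variable (p : (ℕ → ℝ) × (ℕ → ℝ))

def rowProd (j : ℕ) : ℝ := p.1 j * p.2 j

noncomputable def rowRatio (j : ℕ) : ℝ := p.1 j / p.2 j

def PosRows (m : ℕ) : Prop := ∀ j, 1 ≤ j → j ≤ m → 0 < p.1 j ∧ 0 < p.2 j

lemma Sq_eq_sqrt_rowProd (i : ℕ) :
    Sq p.1 p.2 i = √(rowProd p (2 * i - 1) * rowProd p (2 * i)) := by
  simp only [Sq, rowProd, mul_assoc]

lemma Sq_rowBlock (j : ℕ) :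
    Sq p.1 p.2 (if j % 2 = 0 then j / 2 + 1 else (j + 1) / 2)
      = √(rowProd p (rowSrc j) * rowProd p (j + 1)) := by
  rw [Sq_eq_sqrt_rowProd]
  obtain ⟨k, rfl | rfl⟩ := Nat.even_or_odd' j
  · rw [rowSrc, if_pos (by omega), if_pos (by omega), mul_comm (rowProd p _)]
    congr 4 <;> omega
  · rw [rowSrc, if_neg (by omega), if_neg (by omega)]
    congr 4 <;> omega

lemma rOp_fst (j : ℕ) :
    (rOp p).1 j = p.1 (rowSrc j) / √(rowProd p (rowSrc j) * rowProd p (j + 1)) := by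
  rw [← Sq_rowBlock]; rfl

lemma rOp_snd (j : ℕ) :
    (rOp p).2 j = √(rowProd p (rowSrc j) * rowProd p (j + 1)) / p.2 (rowSrc j) := by
  rw [← Sq_rowBlock]; rfl

variable {p} {m : ℕ}

lemma PosRows.rowProd_pos (hp : PosRows p m) {j : ℕ} (hj : 1 ≤ j) (hjm : j ≤ m) :
    0 < rowProd p j :=
  mul_pos (hp j hj hjm).1 (hp j hj hjm).2

lemma PosRows.sqrt_pos (hp : PosRows p (m + 2)) {j : ℕ} (hj : 1 ≤ j) (hjm : j ≤ m) :
    0 < √(rowProd p (rowSrc j) * rowProd p (j + 1)) :=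
  Real.sqrt_pos.2 <| mul_pos
    (hp.rowProd_pos (hj.trans (le_rowSrc j)) ((rowSrc_le j).trans (by omega)))
    (hp.rowProd_pos (by omega) (by omega))

lemma PosRows.rOp (hp : PosRows p (m + 2)) : PosRows (rOp p) m := by
  intro j hj hjm
  have hsrc := hp (rowSrc j) (hj.trans (le_rowSrc j)) ((rowSrc_le j).trans (by omega))
  have hs := hp.sqrt_pos hj hjm
  rw [rOp_fst, rOp_snd]
  exact ⟨div_pos hsrc.1 hs, div_pos hs hsrc.2⟩

lemma rowProd_rOp (hp : PosRows p (m + 2)) {j : ℕ} (hj : 1 ≤ j) (hjm : j ≤ m) :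
    rowProd (rOp p) j = rowRatio p (rowSrc j) := by
  rw [rowProd, rOp_fst, rOp_snd, rowRatio, div_mul_div_cancel₀ (hp.sqrt_pos hj hjm).ne']

lemma rowRatio_rOp (hp : PosRows p (m + 2)) {j : ℕ} (hj : 1 ≤ j) (hjm : j ≤ m) :
    rowRatio (rOp p) j = (rowProd p (j + 1))⁻¹ := by
  have hsrc := hp.rowProd_pos (hj.trans (le_rowSrc j)) ((rowSrc_le j).trans (by omega))
  have hnext := hp.rowProd_pos (j := j + 1) (by omega) (by omega)
  rw [rowRatio, rOp_fst, rOp_snd, div_div_div_eq, ← sq, Real.sq_sqrt (by positivity),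
    ← rowProd]
  field_simp

lemma rowProd_rOp_rOp (hp : PosRows p (m + 4)) {j : ℕ} (hj : 1 ≤ j) (hjm : j ≤ m) :
    rowProd (rOp (rOp p)) j = (rowProd p (rowSrc j + 1))⁻¹ := by
  rw [rowProd_rOp hp.rOp hj hjm,
    rowRatio_rOp hp (hj.trans (le_rowSrc j)) ((rowSrc_le j).trans (by omega))]

lemma rowRatio_rOp_rOp (hp : PosRows p (m + 4)) {j : ℕ} (hj : 1 ≤ j) (hjm : j ≤ m) :
    rowRatio (rOp (rOp p)) j = (rowRatio p (rowSrc (j + 1)))⁻¹ := by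
  rw [rowRatio_rOp hp.rOp hj hjm, rowProd_rOp hp (by omega) (by omega)]

lemma rowProd_rOp_four (hp : PosRows p (m + 8)) {j : ℕ} (hj : 1 ≤ j) (hjm : j ≤ m) :
    rowProd (rOp (rOp (rOp (rOp p)))) j = rowProd p (j + 4) := by
  have := rowSrc_le j
  rw [rowProd_rOp_rOp hp.rOp.rOp hj hjm,
    rowProd_rOp_rOp (m := m + 4) hp (by omega) (by omega), inv_inv,
    rowSrc_rowSrc_add_one_add_one]

lemma rowRatio_rOp_four (hp : PosRows p (m + 8)) {j : ℕ} (hj : 1 ≤ j) (hjm : j ≤ m) :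
    rowRatio (rOp (rOp (rOp (rOp p)))) j = rowRatio p (j + 4) := by
  have := le_rowSrc (j + 1)
  have := rowSrc_le (j + 1)
  rw [rowRatio_rOp_rOp hp.rOp.rOp hj hjm,
    rowRatio_rOp_rOp (m := m + 4) hp (by omega) (by omega), inv_inv,
    rowSrc_rowSrc_succ_add_one]

end Rows

lemma eq_and_eq_of_mul_eq_of_div_eq {a b c d : ℝ} (ha : 0 < a) (hb : 0 < b) (hc : 0 < c)
    (hd : 0 < d) (hmul : a * b = c * d) (hdiv : a / b = c / d) : a = c ∧ b = d := by
  have hac : a = c := by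
    refine (pow_left_inj₀ ha.le hc.le two_ne_zero).1 ?_
    calc a ^ 2 = a * b * (a / b) := by field_simp
      _ = c * d * (c / d) := by rw [hmul, hdiv]
      _ = c ^ 2 := by field_simp
  subst hac
  exact ⟨rfl, mul_left_cancel₀ ha.ne' hmul⟩

theorem rOp_fourth_iterate_general (n : ℕ) (x y : ℕ → ℝ)
    (hx : ∀ i, 1 ≤ i → i ≤ 2 * n → 0 < x i)
    (hy : ∀ i, 1 ≤ i → i ≤ 2 * n → 0 < y i) :
    ∀ j, 1 ≤ j → j ≤ 2 * n - 8 →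
      (rOp (rOp (rOp (rOp (x, y))))).1 j = x (j + 4) ∧
      (rOp (rOp (rOp (rOp (x, y))))).2 j = y (j + 4) := by
  intro j hj hjn
  have hpos : PosRows (x, y) (2 * n - 8 + 8) := fun i hi hin =>
    ⟨hx i hi (by omega), hy i hi (by omega)⟩
  have hpos4 := hpos.rOp.rOp.rOp.rOp j hj hjn
  exact eq_and_eq_of_mul_eq_of_div_eq hpos4.1 hpos4.2 (hx _ (by omega) (by omega))
    (hy _ (by omega) (by omega)) (rowProd_rOp_four hpos hj hjn) (rowRatio_rOp_four hpos hj hjn)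

theorem rOp_fourth_iterate (n : ℕ) (hn : 8 ≤ n) (x y : ℕ → ℝ)
    (hx : ∀ i, 1 ≤ i → i ≤ 2 * n → 0 < x i)
    (hy : ∀ i, 1 ≤ i → i ≤ 2 * n → 0 < y i) :
    ∀ j, 1 ≤ j → j ≤ 2 * n - 8 →
      (rOp (rOp (rOp (rOp (x, y))))).1 j = x (j + 4) ∧
      (rOp (rOp (rOp (rOp (x, y))))).2 j = y (j + 4) :=
  rOp_fourth_iterate_general n x y hx hy
end

section
/- View the edge set of the Aztec diamond graph AD_n as a 2n × 2n array (edge in row r, column c being the edge whose midpoint is the (r,c) position of the array of edge-midpoints). Partition the edges into n+1 classes: for i = 1,…,n-1, the edges in rows 2i and 2i+1 form a class, and the edges of row 1 and of row 2n form two further classes. Then every perfect matching of AD_n contains exactly n edges in each of these n+1 classes. -/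
/-- The set of unit squares of the Aztec diamond region of order `n`:
`p : ℤ × ℤ` encodes the unit square with center `(p.1 + 1/2, p.2 + 1/2)`. -/
def aztecSet (n : ℕ) : Set (ℤ × ℤ) :=
  {p | |2 * p.1 + 1| + |2 * p.2 + 1| ≤ 2 * n}

/-- The Aztec diamond graph `AD_n`. -/
def aztecDiamond (n : ℕ) : SimpleGraph (aztecSet n) :=
  SimpleGraph.fromRel
    (fun u v => |(u : ℤ × ℤ).1 - (v : ℤ × ℤ).1| + |(u : ℤ × ℤ).2 - (v : ℤ × ℤ).2| = 1)

/-- The sum of all four coordinates of the two endpoints of an edge. -/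
def edgeCoordSum : Sym2 (ℤ × ℤ) → ℤ :=
  Sym2.lift ⟨fun p q => p.1 + q.1 + p.2 + q.2, by intros; ring⟩

/-- The row index of an edge of `AD_n` in the `2n × 2n` array of edge-midpoints:
the midpoint of the edge `{p, q}` has coordinate sum `u = (edgeCoordSum + 2)/2`,
with `2u` ranging over the odd integers from `-(2n-1)` to `2n-1`; row `r`
corresponds to `2u = 2r - (2n+1)`. -/
def rowIdx (n : ℕ) (e : Sym2 (aztecSet n)) : ℤ :=
  (edgeCoordSum (e.map Subtype.val) + 2 + 2 * n + 1) / 2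

/-!
Number the squares of the Aztec diamond by their diagonal `p.1 + p.2`, which ranges over
`[-n - 1, n - 1]`. Adjacent squares lie on consecutive diagonals, and the row of an edge is
determined by the lower of its two diagonals. For `j = 0, …, n` the diagonal `2j - n - 1` holds
exactly `n` squares and is an independent set, and the edges meeting it are precisely those in
rows `2j` and `2j + 1` (of which only row `1` exists for `j = 0` and only row `2n` for `j = n`).
A perfect matching covers the squares of an independent set by pairwise distinct edges, so each
class contains exactly `n` matching edges.
-/

namespace SimpleGraph.Subgraph

variable {V : Type*} {G : SimpleGraph V} {M : G.Subgraph}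

theorem IsMatching.ncard_edgeSet_meeting_indepSet (hM : M.IsMatching) {D : Set V}
    (hDM : D ⊆ M.verts) (hD : G.IsIndepSet D) :
    {e ∈ M.edgeSet | ∃ v ∈ e, v ∈ D}.ncard = D.ncard := by
  symm
  refine Set.ncard_congr (fun v hv => (hM.toEdge ⟨v, hDM hv⟩ : Sym2 V)) ?_ ?_ ?_
  · intro v hv
    exact ⟨(hM.toEdge _).2, v, hM.mem_coe_toEdge _, hv⟩
  · intro v w hv hw h
    by_contra hne
    have hvw : (hM.toEdge ⟨v, hDM hv⟩ : Sym2 V) = s(v, w) :=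
      (Sym2.mem_and_mem_iff hne).1 ⟨hM.mem_coe_toEdge _, h ▸ hM.mem_coe_toEdge _⟩
    exact hD hv hw hne (M.adj_sub (M.mem_edgeSet.mp (hvw ▸ (hM.toEdge _).2)))
  · rintro e ⟨he, v, hve, hv⟩
    obtain ⟨w, rfl⟩ := Sym2.mem_iff_exists.mp hve
    exact ⟨v, hv, congrArg Subtype.val (hM.toEdge_eq_of_adj he)⟩

end SimpleGraph.Subgraph

namespace AztecDiamond

variable {n : ℕ}

def diag (v : aztecSet n) : ℤ := (v : ℤ × ℤ).1 + (v : ℤ × ℤ).2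

theorem diag_mem_Icc (v : aztecSet n) : diag v ∈ Set.Icc (-(n : ℤ) - 1) (n - 1) := by
  have hv : |2 * (v : ℤ × ℤ).1 + 1| + |2 * (v : ℤ × ℤ).2 + 1| ≤ 2 * n := v.2
  obtain ⟨hlo, hhi⟩ := abs_le.mp ((abs_add_le _ _).trans hv)
  constructor <;> simp only [diag] <;> omega

theorem diag_eq_add_one_or_of_adj {u v : aztecSet n} (h : (aztecDiamond n).Adj u v) :
    diag v = diag u + 1 ∨ diag u = diag v + 1 := by
  have sum_eq_one_or : ∀ a b : ℤ, |a| + |b| = 1 → a + b = 1 ∨ a + b = -1 := by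
    intro a b h
    rcases abs_cases a with ⟨ha, _⟩ | ⟨ha, _⟩ <;> rcases abs_cases b with ⟨hb, _⟩ | ⟨hb, _⟩ <;>
      omega
  rw [aztecDiamond, SimpleGraph.fromRel_adj] at h
  simp only [diag]
  rcases h.2 with h | h <;> have := sum_eq_one_or _ _ h <;> omega

theorem isIndepSet_setOf_diag_eq (k : ℤ) : (aztecDiamond n).IsIndepSet {v | diag v = k} :=
  fun u hu v hv _ h => by
    rcases diag_eq_add_one_or_of_adj h with h | h <;> simp_all

theorem ncard_setOf_diag_eq {j : ℕ} (hj : j ≤ n) :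
    {v : aztecSet n | diag v = 2 * j - n - 1}.ncard = n := by
  have hmem : ∀ p : ℤ × ℤ, p.1 + p.2 = 2 * j - n - 1 →
      (p ∈ aztecSet n ↔ p.1 ∈ Set.Icc ((j : ℤ) - n) (j - 1)) := by
    rintro ⟨x, y⟩ hxy
    change |2 * x + 1| + |2 * y + 1| ≤ 2 * n ↔ _
    rw [Set.mem_Icc]
    rcases abs_cases (2 * x + 1) with ⟨hx, _⟩ | ⟨hx, _⟩ <;>
      rcases abs_cases (2 * y + 1) with ⟨hy, _⟩ | ⟨hy, _⟩ <;> dsimp only at hxy <;> omega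
  calc {v : aztecSet n | diag v = 2 * j - n - 1}.ncard
      = (Set.Icc ((j : ℤ) - n) (j - 1)).ncard := by
        refine Set.ncard_congr (fun v _ => (v : ℤ × ℤ).1) (fun v hv => (hmem v hv).1 v.2)
          (fun v w hv hw h => ?_) (fun x hx => ?_)
        · have : diag v = diag w := hv.trans hw.symm
          simp only [diag] at this
          exact Subtype.ext (Prod.ext h (by omega))
        · exact ⟨⟨(x, 2 * j - n - 1 - x), (hmem _ (by ring)).2 hx⟩, by simp [diag], rfl⟩
    _ = n := by
        rw [Set.ncard_eq_toFinset_card', Set.toFinset_Icc, Int.card_Icc]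
        omega

theorem rowIdx_mk_of_adj {u v : aztecSet n} (h : (aztecDiamond n).Adj u v) :
    rowIdx n s(u, v) = min (diag u) (diag v) + n + 2 := by
  have hsum : rowIdx n s(u, v) = (diag u + diag v + 2 * n + 3) / 2 := by
    simp only [rowIdx, Sym2.map_mk, edgeCoordSum, Sym2.lift_mk, diag]
    ring_nf
  rcases diag_eq_add_one_or_of_adj h with h | h <;> omega

theorem rowIdx_mem_Icc {e : Sym2 (aztecSet n)} (he : e ∈ (aztecDiamond n).edgeSet) :
    rowIdx n e ∈ Set.Icc 1 (2 * n : ℤ) := by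
  induction e using Sym2.ind with
  | h u v =>
    rw [SimpleGraph.mem_edgeSet] at he
    have hu := diag_mem_Icc u
    have hv := diag_mem_Icc v
    rw [Set.mem_Icc] at hu hv ⊢
    rw [rowIdx_mk_of_adj he]
    rcases diag_eq_add_one_or_of_adj he with h | h <;> omega

theorem exists_mem_diag_eq_iff {e : Sym2 (aztecSet n)} (he : e ∈ (aztecDiamond n).edgeSet)
    (k : ℤ) : (∃ v ∈ e, diag v = k) ↔ rowIdx n e = k + n + 1 ∨ rowIdx n e = k + n + 2 := by
  induction e using Sym2.ind with
  | h u v =>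
    rw [SimpleGraph.mem_edgeSet] at he
    simp only [Sym2.mem_iff, exists_eq_or_imp, exists_eq_left, rowIdx_mk_of_adj he]
    rcases diag_eq_add_one_or_of_adj he with h | h <;> omega

theorem ncard_rowIdx_class {M : (aztecDiamond n).Subgraph} (hM : M.IsPerfectMatching)
    {j : ℕ} (hj : j ≤ n) {P : ℤ → Prop}
    (hP : ∀ r : ℤ, 1 ≤ r → r ≤ 2 * n → (P r ↔ r = 2 * j ∨ r = 2 * j + 1)) :
    {e ∈ M.edgeSet | P (rowIdx n e)}.ncard = n := by
  have hclass : {e ∈ M.edgeSet | P (rowIdx n e)} =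
      {e ∈ M.edgeSet | ∃ v ∈ e, v ∈ {v | diag v = 2 * j - n - 1}} := by
    ext e
    refine and_congr_right fun he => ?_
    have he' := M.edgeSet_subset he
    obtain ⟨hlo, hhi⟩ := rowIdx_mem_Icc he'
    rw [hP _ hlo hhi]
    simp only [Set.mem_ofPred_eq, exists_mem_diag_eq_iff he']
    omega
  rw [hclass, hM.1.ncard_edgeSet_meeting_indepSet (fun v _ => hM.2 v)
    (isIndepSet_setOf_diag_eq _), ncard_setOf_diag_eq hj]

end AztecDiamond

open AztecDiamond in
theorem aztecDiamond_row_classes (n : ℕ)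
    (M : (aztecDiamond n).Subgraph) (hM : M.IsPerfectMatching) :
    (∀ i : ℕ, 1 ≤ i → i ≤ n - 1 →
      {e ∈ M.edgeSet | rowIdx n e = 2 * i ∨ rowIdx n e = 2 * i + 1}.ncard = n) ∧
    {e ∈ M.edgeSet | rowIdx n e = 1}.ncard = n ∧
    {e ∈ M.edgeSet | rowIdx n e = 2 * n}.ncard = n := by
  refine ⟨fun i _ hi => ?_, ?_, ?_⟩
  · exact ncard_rowIdx_class hM (P := fun r => r = 2 * i ∨ r = 2 * i + 1) (by omega)
      fun _ _ _ => Iff.rfl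
  · exact ncard_rowIdx_class hM (P := (· = 1)) (j := 0) n.zero_le fun _ _ _ => by omega
  · exact ncard_rowIdx_class hM (P := (· = 2 * n)) le_rfl fun _ _ _ => by omega
end

section
/- View the edge set of the Aztec diamond graph AD_n as a 2n × 2n array and partition the edges into n classes, where for i = 1,…,n the i-th class consists of the edges in columns 2i-1 and 2i. Then every perfect matching of AD_n contains exactly n+1 edges in each class. -/
/-- The difference of coordinate sums of the two endpoints of an edge. -/
def edgeCoordDiff : Sym2 (ℤ × ℤ) → ℤ :=
  Sym2.lift ⟨fun p q => p.1 + q.1 - p.2 - q.2, by intros; ring⟩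

/-- The column index of an edge of `AD_n` in the `2n × 2n` array of edge-midpoints:
the midpoint of the edge `{p, q}` has coordinate difference `v = edgeCoordDiff / 2`,
with `2v` ranging over the odd integers from `-(2n-1)` to `2n-1`; column `c`
corresponds to `2v = 2c - (2n+1)`. -/
def colIdx (n : ℕ) (e : Sym2 (aztecSet n)) : ℤ :=
  (edgeCoordDiff (e.map Subtype.val) + 2 * n + 1) / 2

private lemma adj_coords {n : ℕ} {u v : aztecSet n}
    (h : (aztecDiamond n).Adj u v) :
    |(u : ℤ × ℤ).1 - (v : ℤ × ℤ).1| + |(u : ℤ × ℤ).2 - (v : ℤ × ℤ).2| = 1 := by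
  rw [aztecDiamond, SimpleGraph.fromRel_adj] at h
  rcases h.2 with h' | h'
  · exact h'
  · rw [abs_sub_comm ((u : ℤ × ℤ).1), abs_sub_comm ((u : ℤ × ℤ).2)]
    exact h'

private lemma colIdx_mk {n : ℕ} (u v : aztecSet n) :
    colIdx n s(u, v) =
      ((u : ℤ × ℤ).1 + (v : ℤ × ℤ).1 - (u : ℤ × ℤ).2 - (v : ℤ × ℤ).2 + 2 * n + 1) / 2 := by
  rfl

private lemma edge_class {n : ℕ} (i : ℕ) (u v : aztecSet n)
    (h : (aztecDiamond n).Adj u v) :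
    (colIdx n s(u, v) = 2 * i - 1 ∨ colIdx n s(u, v) = 2 * i) ↔
      ((u : ℤ × ℤ).1 - (u : ℤ × ℤ).2 = 2 * i - 1 - n ∨
        (v : ℤ × ℤ).1 - (v : ℤ × ℤ).2 = 2 * i - 1 - n) := by
  have hc := adj_coords h
  rw [colIdx_mk]
  obtain ⟨h1, _⟩ | ⟨h1, _⟩ := abs_cases ((u : ℤ × ℤ).1 - (v : ℤ × ℤ).1) <;>
    obtain ⟨h2, _⟩ | ⟨h2, _⟩ := abs_cases ((u : ℤ × ℤ).2 - (v : ℤ × ℤ).2) <;>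
      rw [h1, h2] at hc <;> omega

theorem aztecDiamond_column_classes (n : ℕ)
    (M : (aztecDiamond n).Subgraph) (hM : M.IsPerfectMatching) :
    ∀ i : ℕ, 1 ≤ i → i ≤ n →
      {e ∈ M.edgeSet | colIdx n e = 2 * i - 1 ∨ colIdx n e = 2 * i}.ncard = n + 1 := by
  intro i hi1 hi2
  obtain ⟨hm, hs⟩ := hM
  choose f hf hu using fun v => hm (hs v)
  set D : ℤ := 2 * i - 1 - n with hD
  set S : Set (aztecSet n) := {v | (v : ℤ × ℤ).1 - (v : ℤ × ℤ).2 = D} with hS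
  set F : aztecSet n → Sym2 (aztecSet n) := fun v => s(v, f v) with hF
  have hfa : ∀ v, (aztecDiamond n).Adj v (f v) := fun v => M.adj_sub (hf v)
  have himg : {e ∈ M.edgeSet | colIdx n e = 2 * i - 1 ∨ colIdx n e = 2 * i} = F '' S := by
    ext e
    induction e using Sym2.ind with
    | _ a b =>
      simp only [Set.mem_sep_iff]
      constructor
      · rintro ⟨heM, hP⟩
        rw [SimpleGraph.Subgraph.mem_edgeSet] at heM
        rcases (edge_class i a b (M.adj_sub heM)).mp hP with ha | hb
        · refine ⟨a, ha, ?_⟩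
          simp only [hF]
          rw [hu a b heM]
        · refine ⟨b, hb, ?_⟩
          simp only [hF]
          rw [hu b a heM.symm, Sym2.eq_swap]
      · rintro ⟨v, hv, hFv⟩
        rw [← hFv]
        exact ⟨SimpleGraph.Subgraph.mem_edgeSet.mpr (hf v),
          (edge_class i v (f v) (hfa v)).mpr (Or.inl hv)⟩
  have hinj : Set.InjOn F S := by
    intro a ha b hb hab
    simp only [hF] at hab
    rw [Sym2.eq_iff] at hab
    rcases hab with ⟨h1, _⟩ | ⟨h1, h2⟩
    · exact h1
    · exfalso
      have hadj : (aztecDiamond n).Adj a b := h2 ▸ hfa a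
      have hc := adj_coords hadj
      have ha' : (a : ℤ × ℤ).1 - (a : ℤ × ℤ).2 = D := ha
      have hb' : (b : ℤ × ℤ).1 - (b : ℤ × ℤ).2 = D := hb
      obtain ⟨e1, _⟩ | ⟨e1, _⟩ := abs_cases ((a : ℤ × ℤ).1 - (b : ℤ × ℤ).1) <;>
        obtain ⟨e2, _⟩ | ⟨e2, _⟩ := abs_cases ((a : ℤ × ℤ).2 - (b : ℤ × ℤ).2) <;>
          rw [e1, e2] at hc <;> omega
  rw [himg, Set.ncard_image_of_injOn hinj]
  have hginj : Set.InjOn (fun v : aztecSet n => (v : ℤ × ℤ).2) S := by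
    intro a ha b hb hab
    have ha' : (a : ℤ × ℤ).1 - (a : ℤ × ℤ).2 = D := ha
    have hb' : (b : ℤ × ℤ).1 - (b : ℤ × ℤ).2 = D := hb
    simp only at hab
    apply Subtype.ext
    apply Prod.ext
    · omega
    · exact hab
  have himg2 : (fun v : aztecSet n => (v : ℤ × ℤ).2) '' S = Set.Icc (-(i : ℤ)) (n - i) := by
    ext y
    simp only [Set.mem_image, Set.mem_Icc]
    constructor
    · rintro ⟨v, hv, rfl⟩
      have hv' : (v : ℤ × ℤ).1 - (v : ℤ × ℤ).2 = D := hv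
      have hmem : |2 * (v : ℤ × ℤ).1 + 1| + |2 * (v : ℤ × ℤ).2 + 1| ≤ 2 * n := v.2
      obtain ⟨e1, _⟩ | ⟨e1, _⟩ := abs_cases (2 * (v : ℤ × ℤ).1 + 1) <;>
        obtain ⟨e2, _⟩ | ⟨e2, _⟩ := abs_cases (2 * (v : ℤ × ℤ).2 + 1) <;>
          rw [e1, e2] at hmem <;> omega
    · rintro ⟨hy1, hy2⟩
      have hmem : (y + D, y) ∈ aztecSet n := by
        show |2 * (y + D) + 1| + |2 * y + 1| ≤ 2 * n
        obtain ⟨e1, _⟩ | ⟨e1, _⟩ := abs_cases (2 * (y + D) + 1) <;>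
          obtain ⟨e2, _⟩ | ⟨e2, _⟩ := abs_cases (2 * y + 1) <;>
            rw [e1, e2] <;> omega
      refine ⟨⟨(y + D, y), hmem⟩, ?_, rfl⟩
      show (y + D) - y = D
      ring
  calc S.ncard = ((fun v : aztecSet n => (v : ℤ × ℤ).2) '' S).ncard :=
        (Set.ncard_image_of_injOn hginj).symm
    _ = (Set.Icc (-(i : ℤ)) (n - i)).ncard := by rw [himg2]
    _ = n + 1 := by
        rw [← Finset.coe_Icc, Set.ncard_coe_finset, Int.card_Icc]
        omega
end
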